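/- arXiv:1901.01179 — 2 statements merged into one kernel-verified Lean document; each statement's English description precedes it below -/
import Mathlib

section
/- Let μ ∈ (0,1). For any f ∈ D^μ([0,1],E), the Hölder-type seminorms [f]_μ = sup_{0≤s≤t≤u≤1} Δ(f;s,t,u)/(u-s)^μ and [f]_{~μ} = sup_{η>0} N(f;η)/η^μ are equivalent: (1/2)[f]_{~μ} ≤ [f]_μ ≤ 2[f]_{~μ}. -/
/-!
If `Δ ≤ D` on `[σ, τ]`, split `(σ, τ]` at the first time `θ` at which `f` leaves the ball of
radius `D + ε` around `f σ`. Right-continuity puts `f θ` outside that ball, so `Δ(f; σ, θ, u) ≤ D`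
forces `d(f θ, f u) ≤ D` for `u ≥ θ`; hence `N(f; (σ, τ)) ≤ 2D`, which gives
`[f]_{~μ} ≤ 2 [f]_μ`. Conversely, every split point `θ` of `(s, u)` lies on one side of `t`, so
`Δ(f; s, t, u) ≤ N(f; (s, u))`, which gives `[f]_μ ≤ [f]_{~μ}`.
-/

open MeasureTheory Set Filter

noncomputable section

/-- `f` is càdlàg on `[0,1]`: right-continuous on `[0,1)` and with left limits on `(0,1]`. -/
def IsCadlagOn {E : Type*} [MetricSpace E] (f : ℝ → E) : Prop :=
  (∀ t ∈ Set.Ico (0:ℝ) 1, ContinuousWithinAt f (Set.Ici t) t) ∧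
  (∀ t ∈ Set.Ioc (0:ℝ) 1, ∃ l : E, Filter.Tendsto f (nhdsWithin t (Set.Iio t)) (nhds l))

/-- `Δ(f;s,t,u) = d(f(s),f(t)) ∧ d(f(t),f(u))`. -/
def tripleDelta {E : Type*} [MetricSpace E] (f : ℝ → E) (s t u : ℝ) : ℝ :=
  min (dist (f s) (f t)) (dist (f t) (f u))

/-- Standard modulus of càdlàguity `Δ(f;(σ,τ))`. -/
def deltaMod {E : Type*} [MetricSpace E] (f : ℝ → E) (σ τ : ℝ) : ℝ :=
  sSup {x : ℝ | ∃ s t u : ℝ, σ ≤ s ∧ s ≤ t ∧ t ≤ u ∧ u ≤ τ ∧ x = tripleDelta f s t u}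

/-- Fernique's modulus `N(f;(σ,τ))`. -/
def fernMod {E : Type*} [MetricSpace E] (f : ℝ → E) (σ τ : ℝ) : ℝ :=
  sInf {x : ℝ | ∃ θ : ℝ, σ < θ ∧ θ ≤ τ ∧
    x = sSup {y : ℝ | ∃ s u : ℝ, σ ≤ s ∧ s < θ ∧ θ ≤ u ∧ u ≤ τ ∧
      y = max (dist (f σ) (f s)) (dist (f u) (f τ))}}

/-- `N(f;η) = sup_{0 < τ - σ ≤ η} N(f;(σ,τ))` (with `0 ≤ σ < τ ≤ 1`). -/
def fernEta {E : Type*} [MetricSpace E] (f : ℝ → E) (η : ℝ) : ℝ :=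
  sSup {x : ℝ | ∃ σ τ : ℝ, 0 ≤ σ ∧ σ < τ ∧ τ ≤ 1 ∧ τ - σ ≤ η ∧ x = fernMod f σ τ}

/-- The set of quotients defining `[f]_μ`. -/
def holderSet {E : Type*} [MetricSpace E] (μ : ℝ) (f : ℝ → E) : Set ℝ :=
  {x : ℝ | ∃ s t u : ℝ, 0 ≤ s ∧ s ≤ t ∧ t ≤ u ∧ u ≤ 1 ∧
    x = tripleDelta f s t u / (u - s) ^ μ}

/-- `[f]_μ`. -/
def holderSemi {E : Type*} [MetricSpace E] (μ : ℝ) (f : ℝ → E) : ℝ :=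
  sSup (holderSet μ f)

/-- The set of quotients defining `|f]_μ`. -/
def leftSet {E : Type*} [MetricSpace E] (μ : ℝ) (f : ℝ → E) : Set ℝ :=
  {x : ℝ | ∃ t : ℝ, 0 < t ∧ t ≤ 1 ∧ x = dist (f 0) (f t) / t ^ μ}

/-- `|f]_μ = sup_{t ∈ (0,1]} d(f(0),f(t))/t^μ`. -/
def leftSemi {E : Type*} [MetricSpace E] (μ : ℝ) (f : ℝ → E) : ℝ :=
  sSup (leftSet μ f)

/-- The set of quotients defining `[f|_μ`. -/
def rightSet {E : Type*} [MetricSpace E] (μ : ℝ) (f : ℝ → E) : Set ℝ :=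
  {x : ℝ | ∃ t : ℝ, 0 ≤ t ∧ t < 1 ∧ x = dist (f 1) (f t) / (1 - t) ^ μ}

/-- `[f|_μ = sup_{t ∈ [0,1)} d(f(1),f(t))/(1-t)^μ`. -/
def rightSemi {E : Type*} [MetricSpace E] (μ : ℝ) (f : ℝ → E) : ℝ :=
  sSup (rightSet μ f)

/-- `[f]_{~μ} = sup_{η > 0} N(f;η)/η^μ`. -/
def tildeSemi {E : Type*} [MetricSpace E] (μ : ℝ) (f : ℝ → E) : ℝ :=
  sSup {x : ℝ | ∃ η : ℝ, 0 < η ∧ x = fernEta f η / η ^ μ}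

/-- `[f]_{^μ} = sup_{0 < s < u ≤ 1} Δ(f;s,(s+u)/2,u)/(u-s)^μ`. -/
def midSemi {E : Type*} [MetricSpace E] (μ : ℝ) (f : ℝ → E) : ℝ :=
  sSup {x : ℝ | ∃ s u : ℝ, 0 < s ∧ s < u ∧ u ≤ 1 ∧
    x = tripleDelta f s ((s + u) / 2) u / (u - s) ^ μ}

/-- Membership in `D^μ([0,1],E)`: càdlàg with finite Hölder-type seminorms. -/
def MemDHolder {E : Type*} [MetricSpace E] (μ : ℝ) (f : ℝ → E) : Prop :=
  IsCadlagOn f ∧ BddAbove (holderSet μ f) ∧ BddAbove (leftSet μ f) ∧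
    BddAbove (rightSet μ f)

/-- `[[f]]_{μ,p}^p`, the triple-integral quantity. -/
def tripleIntP {E : Type*} [MetricSpace E] (μ p : ℝ) (f : ℝ → E) : ℝ :=
  ∫ q in {q : ℝ × ℝ × ℝ | 0 ≤ q.1 ∧ q.1 < q.2.1 ∧ q.2.1 < q.2.2 ∧ q.2.2 ≤ 1},
    tripleDelta f q.1 q.2.1 q.2.2 ^ p / (q.2.2 - q.1) ^ (μ * p + 3)

/-- `[[f]]_{μ,p}`. -/
def tripleSemi {E : Type*} [MetricSpace E] (μ p : ℝ) (f : ℝ → E) : ℝ :=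
  tripleIntP μ p f ^ (1 / p)

/-- `||f]]_{μ,p}^p`. -/
def leftIntP {E : Type*} [MetricSpace E] (μ p : ℝ) (f : ℝ → E) : ℝ :=
  ∫ t in (0:ℝ)..1, dist (f 0) (f t) ^ p / t ^ (μ * p + 1)

/-- `||f]]_{μ,p}`. -/
def leftIntSemi {E : Type*} [MetricSpace E] (μ p : ℝ) (f : ℝ → E) : ℝ :=
  leftIntP μ p f ^ (1 / p)

/-- `[[f||_{μ,p}^p`. -/
def rightIntP {E : Type*} [MetricSpace E] (μ p : ℝ) (f : ℝ → E) : ℝ :=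
  ∫ t in (0:ℝ)..1, dist (f 1) (f t) ^ p / (1 - t) ^ (μ * p + 1)

/-- `[[f||_{μ,p}`. -/
def rightIntSemi {E : Type*} [MetricSpace E] (μ p : ℝ) (f : ℝ → E) : ℝ :=
  rightIntP μ p f ^ (1 / p)

/-- The sup over `[0,1]` of the norm of an `ℝ^d`-valued function. -/
def supNorm {k : ℕ} (f : ℝ → EuclideanSpace ℝ (Fin k)) : ℝ :=
  sSup {x : ℝ | ∃ t : ℝ, 0 ≤ t ∧ t ≤ 1 ∧ x = ‖f t‖}

/-- Dyadic projection `π_n`. -/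
def dyadicProj (n : ℕ) (t : ℝ) : ℝ :=
  if t = 1 then 1 - 1 / 2 ^ n else (⌊t * 2 ^ n⌋ : ℝ) / 2 ^ n

section Moduli

variable {E : Type*} [MetricSpace E] {f : ℝ → E}

@[simp]
lemma tripleDelta_self (f : ℝ → E) (s : ℝ) : tripleDelta f s s s = 0 := by
  simp [tripleDelta]

def fernSplit (f : ℝ → E) (σ θ τ : ℝ) : ℝ :=
  sSup {y : ℝ | ∃ s u : ℝ, σ ≤ s ∧ s < θ ∧ θ ≤ u ∧ u ≤ τ ∧
    y = max (dist (f σ) (f s)) (dist (f u) (f τ))}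

lemma fernMod_eq (f : ℝ → E) (σ τ : ℝ) :
    fernMod f σ τ = sInf {x : ℝ | ∃ θ : ℝ, σ < θ ∧ θ ≤ τ ∧ x = fernSplit f σ θ τ} :=
  rfl

lemma fernSplit_nonneg (f : ℝ → E) (σ θ τ : ℝ) : 0 ≤ fernSplit f σ θ τ := by
  refine Real.sSup_nonneg ?_
  rintro y ⟨s, u, -, -, -, -, rfl⟩
  exact le_max_of_le_left dist_nonneg

lemma bddBelow_fernSplit_set (f : ℝ → E) (σ τ : ℝ) :
    BddBelow {x : ℝ | ∃ θ : ℝ, σ < θ ∧ θ ≤ τ ∧ x = fernSplit f σ θ τ} := by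
  refine ⟨0, ?_⟩
  rintro x ⟨θ, -, -, rfl⟩
  exact fernSplit_nonneg f σ θ τ

lemma fernMod_nonneg (f : ℝ → E) (σ τ : ℝ) : 0 ≤ fernMod f σ τ :=
  Real.sInf_nonneg fun _ ⟨θ, _, _, hx⟩ => hx ▸ fernSplit_nonneg f σ θ τ

lemma fernEta_nonneg (f : ℝ → E) (η : ℝ) : 0 ≤ fernEta f η := by
  refine Real.sSup_nonneg ?_
  rintro x ⟨σ, τ, -, -, -, -, rfl⟩
  exact fernMod_nonneg f σ τ

lemma fernMod_le_of_split {σ θ τ M : ℝ} (hσθ : σ < θ) (hθτ : θ ≤ τ) (hM : 0 ≤ M)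
    (hleft : ∀ s ∈ Ico σ θ, dist (f σ) (f s) ≤ M)
    (hright : ∀ u ∈ Icc θ τ, dist (f u) (f τ) ≤ M) :
    fernMod f σ τ ≤ M := by
  rw [fernMod_eq]
  refine (csInf_le (bddBelow_fernSplit_set f σ τ) ⟨θ, hσθ, hθτ, rfl⟩).trans (Real.sSup_le ?_ hM)
  rintro y ⟨s, u, hσs, hsθ, hθu, huτ, rfl⟩
  exact max_le (hleft s ⟨hσs, hsθ⟩) (hright u ⟨hθu, huτ⟩)

lemma le_fernSplit {σ θ τ s u : ℝ} (hb : Bornology.IsBounded (f '' Icc σ τ)) (hσs : σ ≤ s)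
    (hsθ : s < θ) (hθu : θ ≤ u) (huτ : u ≤ τ) :
    max (dist (f σ) (f s)) (dist (f u) (f τ)) ≤ fernSplit f σ θ τ := by
  obtain ⟨C, hC⟩ := Metric.isBounded_iff.mp hb
  have hmem : ∀ v, σ ≤ v → v ≤ τ → f v ∈ f '' Icc σ τ := fun v h₁ h₂ => ⟨v, ⟨h₁, h₂⟩, rfl⟩
  have hστ : σ ≤ τ := hσs.trans (hsθ.le.trans (hθu.trans huτ))
  refine le_csSup ⟨C, ?_⟩ ⟨s, u, hσs, hsθ, hθu, huτ, rfl⟩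
  rintro y ⟨s', u', hσs', hs'θ, hθu', hu'τ, rfl⟩
  exact max_le (hC (hmem σ le_rfl hστ) (hmem s' hσs' (by linarith)))
    (hC (hmem u' (by linarith) hu'τ) (hmem τ hστ le_rfl))

lemma tripleDelta_le_fernMod {σ t τ : ℝ} (hb : Bornology.IsBounded (f '' Icc σ τ))
    (hσt : σ ≤ t) (htτ : t ≤ τ) (hστ : σ < τ) : tripleDelta f σ t τ ≤ fernMod f σ τ := by
  rw [fernMod_eq]
  refine le_csInf ⟨_, τ, hστ, le_rfl, rfl⟩ ?_
  rintro x ⟨θ, hσθ, hθτ, rfl⟩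
  by_cases hθt : θ ≤ t
  · exact (min_le_right _ _).trans
      ((le_max_right _ _).trans (le_fernSplit hb le_rfl hσθ hθt htτ))
  · exact (min_le_left _ _).trans
      ((le_max_left _ _).trans (le_fernSplit hb hσt (not_le.mp hθt) hθτ le_rfl))

lemma le_apply_csInf_of_continuousWithinAt {α β : Type*} [ConditionallyCompleteLinearOrder α]
    [TopologicalSpace α] [OrderTopology α] [TopologicalSpace β] [Preorder β]
    [OrderClosedTopology β] {g : α → β} {A : Set α} {c : β} (hA : A.Nonempty)
    (hbdd : BddBelow A) (hg : ContinuousWithinAt g (Ici (sInf A)) (sInf A))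
    (h : ∀ t ∈ A, c ≤ g t) : c ≤ g (sInf A) :=
  ContinuousWithinAt.closure_le (csInf_mem_closure hA hbdd) continuousWithinAt_const
    (hg.mono fun _ ht => csInf_le hbdd ht) h

lemma fernMod_le_two_mul_add {σ τ D ε : ℝ} (hστ : σ < τ)
    (hrc : ∀ t ∈ Ico σ τ, ContinuousWithinAt f (Ici t) t)
    (hD : ∀ s t u, σ ≤ s → s ≤ t → t ≤ u → u ≤ τ → tripleDelta f s t u ≤ D) (hε : 0 < ε) :
    fernMod f σ τ ≤ 2 * D + ε := by
  have hD0 : 0 ≤ D := by simpa using hD σ σ σ le_rfl le_rfl le_rfl hστ.le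
  set A := {t ∈ Icc σ τ | D + ε < dist (f σ) (f t)}
  have hnear : ∀ s ∈ Icc σ τ, s ∉ A → dist (f σ) (f s) ≤ 2 * D + ε := fun s hs hsA => by
    have : dist (f σ) (f s) ≤ D + ε := not_lt.mp fun h => hsA ⟨hs, h⟩
    linarith
  rcases A.eq_empty_or_nonempty with hA | hA
  · refine fernMod_le_of_split hστ le_rfl (by linarith)
      (fun s hs => hnear s ⟨hs.1, hs.2.le⟩ (hA ▸ notMem_empty s)) fun u hu => ?_
    rw [le_antisymm hu.2 hu.1, dist_self]
    linarith
  have hbdd : BddBelow A := ⟨σ, fun t ht => ht.1.1⟩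
  set θ := sInf A
  have hσθ : σ ≤ θ := le_csInf hA fun t ht => ht.1.1
  have hθτ : θ ≤ τ := (csInf_le hbdd hA.some_mem).trans hA.some_mem.1.2
  have hfar : θ < τ → D + ε ≤ dist (f σ) (f θ) := fun hθτ' =>
    le_apply_csInf_of_continuousWithinAt hA hbdd
      (tendsto_const_nhds.dist (hrc θ ⟨hσθ, hθτ'⟩)) fun t ht => ht.2.le
  have hσθ' : σ < θ := by
    refine hσθ.lt_of_ne fun h => ?_
    have := hfar (h ▸ hστ)
    rw [← h, dist_self] at this
    linarith
  refine fernMod_le_of_split hσθ' hθτ (by linarith)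
    (fun s hs => hnear s ⟨hs.1, hs.2.le.trans hθτ⟩ (notMem_of_lt_csInf hs.2 hbdd)) fun u hu => ?_
  rcases hθτ.eq_or_lt with hθτ' | hθτ'
  · rw [le_antisymm hu.2 (hθτ' ▸ hu.1), dist_self]
    linarith
  · have hfar := hfar hθτ'
    have hclose : ∀ v ∈ Icc θ τ, dist (f θ) (f v) ≤ D := fun v hv =>
      (min_le_iff.mp (hD σ θ v le_rfl hσθ hv.1 hv.2)).resolve_left (by linarith)
    calc dist (f u) (f τ) ≤ dist (f θ) (f u) + dist (f θ) (f τ) := dist_triangle_left _ _ _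
      _ ≤ 2 * D + ε := by linarith [hclose u hu, hclose τ ⟨hθτ, le_rfl⟩]

lemma fernMod_le_two_mul {σ τ D : ℝ} (hστ : σ < τ)
    (hrc : ∀ t ∈ Ico σ τ, ContinuousWithinAt f (Ici t) t)
    (hD : ∀ s t u, σ ≤ s → s ≤ t → t ≤ u → u ≤ τ → tripleDelta f s t u ≤ D) :
    fernMod f σ τ ≤ 2 * D :=
  le_of_forall_pos_le_add fun _ hε => fernMod_le_two_mul_add hστ hrc hD hε

end Moduli

section Holder

variable {E : Type*} [MetricSpace E] {f : ℝ → E} {μ : ℝ}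

lemma holderSemi_nonneg (hH : BddAbove (holderSet μ f)) : 0 ≤ holderSemi μ f :=
  le_csSup hH ⟨0, 0, 0, le_rfl, le_rfl, le_rfl, zero_le_one, by simp⟩

lemma tripleDelta_le_holderSemi_mul (hH : BddAbove (holderSet μ f)) {s t u : ℝ} (hs : 0 ≤ s)
    (hst : s ≤ t) (htu : t ≤ u) (hu : u ≤ 1) :
    tripleDelta f s t u ≤ holderSemi μ f * (u - s) ^ μ := by
  rcases (hst.trans htu).eq_or_lt with rfl | hsu
  · obtain rfl := le_antisymm htu hst
    rw [tripleDelta_self]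
    exact mul_nonneg (holderSemi_nonneg hH) (Real.rpow_nonneg (sub_self _).ge μ)
  · rw [← div_le_iff₀ (Real.rpow_pos_of_pos (sub_pos.mpr hsu) μ)]
    exact le_csSup hH ⟨s, t, u, hs, hst, htu, hu, rfl⟩

lemma isBounded_image_Icc_of_bddAbove_leftSet (hμ : 0 ≤ μ) (hL : BddAbove (leftSet μ f)) :
    Bornology.IsBounded (f '' Icc 0 1) := by
  obtain ⟨C, hC⟩ := hL
  have hC0 : 0 ≤ C := (div_nonneg dist_nonneg (Real.rpow_nonneg zero_le_one μ)).trans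
    (hC ⟨1, one_pos, le_rfl, rfl⟩)
  refine (Metric.isBounded_closedBall (x := f 0) (r := C)).subset ?_
  rintro _ ⟨t, ⟨ht0, ht1⟩, rfl⟩
  rw [Metric.mem_closedBall, dist_comm]
  rcases ht0.eq_or_lt with rfl | ht0
  · rwa [dist_self]
  · have htμ : t ^ μ ≤ 1 := Real.rpow_le_one ht0.le ht1 hμ
    exact (le_div_self dist_nonneg (Real.rpow_pos_of_pos ht0 μ) htμ).trans (hC ⟨t, ht0, ht1, rfl⟩)

lemma fernMod_le_two_mul_holderSemi_mul (hμ : 0 ≤ μ)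
    (hrc : ∀ t ∈ Ico (0 : ℝ) 1, ContinuousWithinAt f (Ici t) t) (hH : BddAbove (holderSet μ f))
    {σ τ η : ℝ} (hσ : 0 ≤ σ) (hστ : σ < τ) (hτ : τ ≤ 1) (hη : τ - σ ≤ η) :
    fernMod f σ τ ≤ 2 * holderSemi μ f * η ^ μ := by
  rw [mul_assoc]
  refine fernMod_le_two_mul hστ (fun t ht => hrc t ⟨hσ.trans ht.1, ht.2.trans_le hτ⟩) ?_
  intro s t u hs hst htu hu
  refine (tripleDelta_le_holderSemi_mul hH (hσ.trans hs) hst htu (hu.trans hτ)).trans ?_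
  gcongr
  · exact holderSemi_nonneg hH
  · linarith
  · linarith

lemma fernEta_div_rpow_le (hμ : 0 ≤ μ)
    (hrc : ∀ t ∈ Ico (0 : ℝ) 1, ContinuousWithinAt f (Ici t) t) (hH : BddAbove (holderSet μ f))
    {η : ℝ} (hη : 0 < η) : fernEta f η / η ^ μ ≤ 2 * holderSemi μ f := by
  rw [div_le_iff₀ (Real.rpow_pos_of_pos hη μ)]
  refine Real.sSup_le ?_ (by have := holderSemi_nonneg hH; positivity)
  rintro x ⟨σ, τ, hσ, hστ, hτ, hτσ, rfl⟩
  exact fernMod_le_two_mul_holderSemi_mul hμ hrc hH hσ hστ hτ hτσ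

lemma tildeSemi_le_two_mul_holderSemi (hμ : 0 ≤ μ)
    (hrc : ∀ t ∈ Ico (0 : ℝ) 1, ContinuousWithinAt f (Ici t) t) (hH : BddAbove (holderSet μ f)) :
    tildeSemi μ f ≤ 2 * holderSemi μ f := by
  refine Real.sSup_le ?_ (by have := holderSemi_nonneg hH; positivity)
  rintro x ⟨η, hη, rfl⟩
  exact fernEta_div_rpow_le hμ hrc hH hη

lemma holderSemi_le_tildeSemi (hμ : 0 ≤ μ)
    (hrc : ∀ t ∈ Ico (0 : ℝ) 1, ContinuousWithinAt f (Ici t) t) (hH : BddAbove (holderSet μ f))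
    (hL : BddAbove (leftSet μ f)) :
    holderSemi μ f ≤ tildeSemi μ f := by
  have hb := isBounded_image_Icc_of_bddAbove_leftSet hμ hL
  have hT : BddAbove {x : ℝ | ∃ η : ℝ, 0 < η ∧ x = fernEta f η / η ^ μ} :=
    ⟨_, fun _ ⟨η, hη, hx⟩ => hx ▸ fernEta_div_rpow_le hμ hrc hH hη⟩
  have hT0 : 0 ≤ tildeSemi μ f :=
    (div_nonneg (fernEta_nonneg f 1) (Real.rpow_nonneg zero_le_one μ)).trans
      (le_csSup hT ⟨1, one_pos, rfl⟩)
  refine Real.sSup_le ?_ hT0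
  rintro x ⟨s, t, u, hs, hst, htu, hu, rfl⟩
  rcases (hst.trans htu).eq_or_lt with rfl | hsu
  · obtain rfl := le_antisymm htu hst
    simpa using hT0
  have hN : BddAbove {x : ℝ | ∃ σ τ : ℝ, 0 ≤ σ ∧ σ < τ ∧ τ ≤ 1 ∧ τ - σ ≤ u - s ∧
      x = fernMod f σ τ} :=
    ⟨_, fun _ ⟨σ, τ, hσ, hστ, hτ, hτσ, hx⟩ =>
      hx ▸ fernMod_le_two_mul_holderSemi_mul hμ hrc hH hσ hστ hτ hτσ⟩
  calc tripleDelta f s t u / (u - s) ^ μ ≤ fernMod f s u / (u - s) ^ μ := by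
        gcongr
        exact tripleDelta_le_fernMod (hb.subset (image_mono (Icc_subset_Icc hs hu))) hst htu hsu
    _ ≤ fernEta f (u - s) / (u - s) ^ μ := by
        gcongr
        exact le_csSup hN ⟨s, u, hs, hsu, hu, le_rfl, rfl⟩
    _ ≤ tildeSemi μ f := le_csSup hT ⟨u - s, sub_pos.mpr hsu, rfl⟩

end Holder

theorem stmt3 {E : Type*} [MetricSpace E] (μ : ℝ) (hμ : μ ∈ Set.Ioo (0:ℝ) 1)
    (f : ℝ → E) (hf : MemDHolder μ f) :
    (1 / 2) * tildeSemi μ f ≤ holderSemi μ f ∧ holderSemi μ f ≤ 2 * tildeSemi μ f := by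
  obtain ⟨⟨hrc, -⟩, hH, hL, -⟩ := hf
  have hTH := tildeSemi_le_two_mul_holderSemi hμ.1.le hrc hH
  have hHT := holderSemi_le_tildeSemi hμ.1.le hrc hH hL
  have hH0 := holderSemi_nonneg hH
  constructor <;> linarith
end
end

section
/- For μ ∈ (0,1) and any f ∈ D([0,1],E), the Hölder seminorm satisfies [f]_μ ≤ sup_{s≤t≤u, u−s ≤ 1/2} Δ(f;s,t,u)/(u−s)^μ + 2^μ·Δ(f;(0,1)), where Δ(f;(0,1)) = sup_{0≤s≤t≤u≤1} d(f(s),f(t)) ∧ d(f(t),f(u)). -/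
open MeasureTheory Set Filter

noncomputable section

section

variable {E : Type*} [MetricSpace E] (f : ℝ → E)

def holderWindowSet (μ δ : ℝ) : Set ℝ :=
  {x : ℝ | ∃ s t u : ℝ, 0 ≤ s ∧ s ≤ t ∧ t ≤ u ∧ u ≤ 1 ∧ u - s ≤ δ ∧
    x = tripleDelta f s t u / (u - s) ^ μ}

lemma holderWindowSet_subset_holderSet (μ δ : ℝ) : holderWindowSet f μ δ ⊆ holderSet μ f := by
  rintro _ ⟨s, t, u, hs, hst, htu, hu, -, rfl⟩
  exact ⟨s, t, u, hs, hst, htu, hu, rfl⟩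

lemma tripleDelta_nonneg (s t u : ℝ) : 0 ≤ tripleDelta f s t u :=
  le_min dist_nonneg dist_nonneg

lemma deltaMod_nonneg (σ τ : ℝ) : 0 ≤ deltaMod f σ τ :=
  Real.sSup_nonneg <| by
    rintro _ ⟨s, t, u, -, -, -, -, rfl⟩
    exact tripleDelta_nonneg f s t u

lemma sSup_holderWindowSet_nonneg (μ δ : ℝ) : 0 ≤ sSup (holderWindowSet f μ δ) :=
  Real.sSup_nonneg <| by
    rintro _ ⟨s, t, u, -, hst, htu, -, -, rfl⟩
    exact div_nonneg (tripleDelta_nonneg f s t u) (Real.rpow_nonneg (by linarith) μ)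

lemma tripleDelta_le_div_rpow {μ s t u : ℝ} (hμ : 0 ≤ μ) (hst : s ≤ t) (htu : t ≤ u)
    (hus : u - s ≤ 1) : tripleDelta f s t u ≤ tripleDelta f s t u / (u - s) ^ μ := by
  rcases (hst.trans htu).eq_or_lt with rfl | hsu
  · obtain rfl : t = s := le_antisymm htu hst
    simp [tripleDelta]
  · exact le_div_self (tripleDelta_nonneg f s t u) (Real.rpow_pos_of_pos (by linarith) μ)
      (Real.rpow_le_one (by linarith) hus hμ)

/-- `deltaMod` is an `sSup`, junk without an upper bound; `tripleDelta_le_div_rpow` bounds its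
set by that of `holderSemi`. -/
lemma tripleDelta_le_deltaMod {μ s t u : ℝ} (hμ : 0 ≤ μ) (hH : BddAbove (holderSet μ f))
    (hs : 0 ≤ s) (hst : s ≤ t) (htu : t ≤ u) (hu : u ≤ 1) :
    tripleDelta f s t u ≤ deltaMod f 0 1 := by
  obtain ⟨b, hb⟩ := hH
  refine le_csSup ⟨b, ?_⟩ ⟨s, t, u, hs, hst, htu, hu, rfl⟩
  rintro _ ⟨s', t', u', hs', hst', htu', hu', rfl⟩
  exact (tripleDelta_le_div_rpow f hμ hst' htu' (by linarith)).trans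
    (hb ⟨s', t', u', hs', hst', htu', hu', rfl⟩)

/-- Triples wider than `δ` are controlled by the modulus `Δ(f;(0,1))` alone. -/
theorem holderSemi_le_sSup_holderWindowSet_add {μ δ : ℝ} (hμ : 0 ≤ μ) (hδ : 0 < δ) :
    holderSemi μ f ≤ sSup (holderWindowSet f μ δ) + (δ ^ μ)⁻¹ * deltaMod f 0 1 := by
  have hδμ : 0 < δ ^ μ := Real.rpow_pos_of_pos hδ μ
  by_cases hH : BddAbove (holderSet μ f)
  swap
  · -- junk value: `holderSemi μ f = 0`
    rw [holderSemi, Real.sSup_of_not_bddAbove hH]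
    exact add_nonneg (sSup_holderWindowSet_nonneg f μ δ)
      (mul_nonneg (inv_nonneg.2 hδμ.le) (deltaMod_nonneg f 0 1))
  refine csSup_le ⟨_, 0, 0, 0, le_rfl, le_rfl, le_rfl, zero_le_one, rfl⟩ ?_
  rintro _ ⟨s, t, u, hs, hst, htu, hu, rfl⟩
  rcases le_or_gt (u - s) δ with hnarrow | hwide
  · have hx := le_csSup (hH.mono (holderWindowSet_subset_holderSet f μ δ))
      ⟨s, t, u, hs, hst, htu, hu, hnarrow, rfl⟩
    have := mul_nonneg (inv_nonneg.2 hδμ.le) (deltaMod_nonneg f 0 1)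
    linarith
  · calc tripleDelta f s t u / (u - s) ^ μ
        ≤ (δ ^ μ)⁻¹ * tripleDelta f s t u := by
          rw [div_eq_inv_mul]
          exact mul_le_mul_of_nonneg_right (inv_anti₀ hδμ (Real.rpow_le_rpow hδ.le hwide.le hμ))
            (tripleDelta_nonneg f s t u)
      _ ≤ (δ ^ μ)⁻¹ * deltaMod f 0 1 := by
          gcongr
          exact tripleDelta_le_deltaMod f hμ hH hs hst htu hu
      _ ≤ _ := le_add_of_nonneg_left (sSup_holderWindowSet_nonneg f μ δ)

end

theorem stmt17_general {E : Type*} [MetricSpace E] (μ : ℝ) (hμ : μ ∈ Set.Ioo (0:ℝ) 1)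
    (f : ℝ → E) :
    holderSemi μ f ≤
      sSup {x : ℝ | ∃ s t u : ℝ, 0 ≤ s ∧ s ≤ t ∧ t ≤ u ∧ u ≤ 1 ∧ u - s ≤ 1 / 2 ∧
        x = tripleDelta f s t u / (u - s) ^ μ} + 2 ^ μ * deltaMod f 0 1 := by
  have hcoef : (((1 : ℝ) / 2) ^ μ)⁻¹ = 2 ^ μ := by
    rw [one_div, Real.inv_rpow (by norm_num), inv_inv]
  have h := holderSemi_le_sSup_holderWindowSet_add f hμ.1.le (δ := 1 / 2) (by norm_num)
  rw [hcoef] at h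
  exact h

theorem stmt17 {E : Type*} [MetricSpace E] (μ : ℝ) (hμ : μ ∈ Set.Ioo (0:ℝ) 1)
    (f : ℝ → E) (hf : IsCadlagOn f) :
    holderSemi μ f ≤
      sSup {x : ℝ | ∃ s t u : ℝ, 0 ≤ s ∧ s ≤ t ∧ t ≤ u ∧ u ≤ 1 ∧ u - s ≤ 1 / 2 ∧
        x = tripleDelta f s t u / (u - s) ^ μ} + 2 ^ μ * deltaMod f 0 1 :=
  stmt17_general μ hμ f
end
end
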